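/- Let G be a compact simply-connected simple Lie group, let 𝒫 be the union of the closures of all Weyl alcoves containing the origin in their closure, and let L be the coroot lattice. If σ is a face of 𝒫 such that σ + a is also a face of 𝒫 for some nonzero a ∈ L, then both σ and σ + a are faces of the boundary of 𝒫. -/

import Mathlib

open scoped RealInnerProductSpace

noncomputable section

/-- The root system of a compact (simply-connected) simple Lie group of rank `n`, in
abstract form: a finite, reduced, irreducible, crystallographic root system spanning
`𝔱 ≅ ℝ^n`, whose roots are realized as vectors via the inner product
(`α(x) = ⟪α, x⟫`). -/
structure RootSystemData (n : ℕ) where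
  /-- the set of roots -/
  Φ : Finset (EuclideanSpace ℝ (Fin n))
  ne_zero : ∀ α ∈ Φ, α ≠ (0 : EuclideanSpace ℝ (Fin n))
  span_top : Submodule.span ℝ (Φ : Set (EuclideanSpace ℝ (Fin n))) = ⊤
  neg_mem : ∀ α ∈ Φ, -α ∈ Φ
  reflect_mem : ∀ α ∈ Φ, ∀ β ∈ Φ, β - (2 * ⟪β, α⟫ / ⟪α, α⟫) • α ∈ Φ
  crystallographic : ∀ α ∈ Φ, ∀ β ∈ Φ, ∃ k : ℤ, 2 * ⟪β, α⟫ / ⟪α, α⟫ = (k : ℝ)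
  reduced : ∀ α ∈ Φ, ∀ c : ℝ, c • α ∈ Φ → c = 1 ∨ c = -1
  irreducible : ∀ s ⊆ Φ, (∀ α ∈ s, ∀ β ∈ Φ, β ∉ s → ⟪α, β⟫ = 0) → s = ∅ ∨ s = Φ

namespace RootSystemData

variable {n : ℕ} (D : RootSystemData n)

/-- The wall `α⁻¹(k)` of the Stiefel diagram. -/
def wall (α : EuclideanSpace ℝ (Fin n)) (k : ℤ) : Set (EuclideanSpace ℝ (Fin n)) :=
  {x | ⟪α, x⟫ = (k : ℝ)}

/-- The Stiefel diagram `⋃_{α ∈ Φ, k ∈ ℤ} α⁻¹(k) ⊆ 𝔱`. -/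
def stiefelDiagram : Set (EuclideanSpace ℝ (Fin n)) :=
  ⋃ α ∈ D.Φ, ⋃ k : ℤ, wall α k

/-- A vertex of the Stiefel diagram: a point lying on `n` walls whose roots are linearly
independent (hence the unique point of the intersection of these walls). -/
def IsVertex (v : EuclideanSpace ℝ (Fin n)) : Prop :=
  ∃ θ : Fin n → EuclideanSpace ℝ (Fin n),
    (∀ i, θ i ∈ D.Φ) ∧ LinearIndependent ℝ θ ∧ ∀ i, ∃ k : ℤ, ⟪θ i, v⟫ = (k : ℝ)

/-- Two vertices of the Stiefel diagram are joined by an edge: they are the endpoints of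
a `1`-face, i.e. they lie on `n − 1` common walls with linearly independent roots, and
every wall meeting the open segment between them contains both of them. -/
def JoinedByEdge (v w : EuclideanSpace ℝ (Fin n)) : Prop :=
  D.IsVertex v ∧ D.IsVertex w ∧ v ≠ w ∧
    (∃ s : Finset (EuclideanSpace ℝ (Fin n)), s ⊆ D.Φ ∧ s.card = n - 1 ∧
      LinearIndependent ℝ (Subtype.val : {x // x ∈ s} → EuclideanSpace ℝ (Fin n)) ∧
      ∀ α ∈ s, ∃ k : ℤ, ⟪α, v⟫ = (k : ℝ) ∧ ⟪α, w⟫ = (k : ℝ)) ∧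
    ∀ x ∈ openSegment ℝ v w, ∀ α ∈ D.Φ, ∀ k : ℤ,
      ⟪α, x⟫ = (k : ℝ) → (⟪α, v⟫ = (k : ℝ) ∧ ⟪α, w⟫ = (k : ℝ))

end RootSystemData

end

noncomputable section

namespace RootSystemData

variable {n : ℕ} (D : RootSystemData n)

/-- A Weyl alcove: a connected component of the complement of the Stiefel diagram. -/
def IsAlcove (A : Set (EuclideanSpace ℝ (Fin n))) : Prop :=
  ∃ x, x ∉ D.stiefelDiagram ∧ A = connectedComponentIn D.stiefelDiagramᶜ x

/-- `𝒫`: the union of the closures of all Weyl alcoves around the origin (i.e. whose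
closure contains `0`). -/
def alcoveStar : Set (EuclideanSpace ℝ (Fin n)) :=
  {x | ∃ A, D.IsAlcove A ∧ (0 : EuclideanSpace ℝ (Fin n)) ∈ closure A ∧ x ∈ closure A}

/-- A (nonempty) face of the simplicial polytope `𝒫`: the intersection of the closure
of one of the alcoves around the origin with a collection of walls of the Stiefel
diagram. -/
def IsFaceOfStar (σ : Set (EuclideanSpace ℝ (Fin n))) : Prop :=
  σ.Nonempty ∧ ∃ A, D.IsAlcove A ∧ (0 : EuclideanSpace ℝ (Fin n)) ∈ closure A ∧
    ∃ s : Finset (EuclideanSpace ℝ (Fin n) × ℤ), (∀ p ∈ s, p.1 ∈ D.Φ) ∧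
      σ = closure A ∩ ⋂ p ∈ s, wall p.1 p.2

/-- The coroot lattice `L`, generated by the coroots `α^∨ = 2α/⟪α,α⟫`; since `G` is
simply-connected this is the integer lattice of `𝔱`. -/
def corootLattice : AddSubgroup (EuclideanSpace ℝ (Fin n)) :=
  AddSubgroup.closure {x | ∃ α ∈ D.Φ, x = (2 / ⟪α, α⟫) • α}

end RootSystemData

end

/-! The heart of the matter is that a nonzero element `a` of the coroot lattice pairs to at
least `2` in absolute value with some root. Otherwise write `a` as a sum of coroots `γ^∨`; since
`0 < ⟪a, a⟫ = ∑ ⟪γ^∨, a⟫`, some `γ` pairs positively, hence to exactly `1`, with `a`, and then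
`a - γ^∨ = s_γ a` is a shorter sum of coroots with the same property. The descent ends in
`a = γ^∨`, contradicting `⟪γ, γ^∨⟫ = 2`.
Every root maps `𝒫` into `[-1, 1]`, being squeezed between consecutive walls on each alcove
around the origin, and hence maps the interior of `𝒫` into `(-1, 1)`. So a point of `𝒫` that
differs from an interior point by a coroot-lattice vector pairs with every root to an integer of
absolute value `< 2`, and coincides with it. -/

noncomputable section

lemma exists_mem_inner_multiset_sum_pos {E : Type*} [NormedAddCommGroup E]
    [InnerProductSpace ℝ E] {l : Multiset E} (h : l.sum ≠ 0) : ∃ η ∈ l, 0 < ⟪l.sum, η⟫ := by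
  by_contra! hle
  have hsum : ⟪l.sum, l.sum⟫ ≤ 0 := by
    rw [show ⟪l.sum, l.sum⟫ = (l.map (⟪l.sum, ·⟫)).sum from map_multiset_sum (innerₛₗ ℝ l.sum) l]
    simpa using Multiset.sum_map_le_sum_map _ (fun _ => (0 : ℝ)) hle
  exact h (inner_self_eq_zero.mp (le_antisymm hsum real_inner_self_nonneg))

lemma abs_inner_lt_of_mem_interior {E : Type*} [NormedAddCommGroup E] [InnerProductSpace ℝ E]
    [CompleteSpace E] {α : E} (hα : α ≠ 0) {S : Set E} {c : ℝ} (hS : ∀ y ∈ S, |⟪α, y⟫| ≤ c)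
    {x : E} (hx : x ∈ interior S) : |⟪α, x⟫| < c := by
  have hsurj : Function.Surjective (innerSL ℝ α) := fun t =>
    ⟨(t / ⟪α, α⟫) • α, by
      rw [innerSL_apply_apply, real_inner_smul_right,
        div_mul_cancel₀ _ (inner_self_ne_zero.mpr hα)]⟩
  have hsub : interior S ⊆ innerSL ℝ α ⁻¹' Set.Ioo (-c) c := by
    rw [← interior_Icc, ((innerSL ℝ α).isOpenMap hsurj).preimage_interior_eq_interior_preimage
      (innerSL ℝ α).continuous]
    exact interior_mono fun y hy => abs_le.mp (hS y hy)
  exact abs_lt.mpr (hsub hx)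

namespace RootSystemData

variable {n : ℕ}

local notation "V" => EuclideanSpace ℝ (Fin n)

def coroot (α : V) : V := (2 / ⟪α, α⟫) • α

lemma inner_coroot (β α : V) : ⟪β, coroot α⟫ = 2 * ⟪β, α⟫ / ⟪α, α⟫ := by
  rw [coroot, real_inner_smul_right]
  ring

lemma inner_coroot_self {α : V} (hα : α ≠ 0) : ⟪α, coroot α⟫ = 2 := by
  rw [inner_coroot, mul_div_assoc, div_self (inner_self_ne_zero.mpr hα), mul_one]

lemma coroot_neg (α : V) : coroot (-α) = -coroot α := by
  rw [coroot, coroot, inner_neg_neg, smul_neg]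

/-- The reflection `s_γ b = b - ⟪γ, b⟫ γ^∨` is self-adjoint. -/
lemma inner_sub_smul_coroot (β γ b : V) :
    ⟪β, b - ⟪γ, b⟫ • coroot γ⟫ = ⟪β - (2 * ⟪β, γ⟫ / ⟪γ, γ⟫) • γ, b⟫ := by
  rw [inner_sub_right, inner_sub_left, real_inner_smul_right, real_inner_smul_left,
    inner_coroot]
  ring

variable (D : RootSystemData n)

lemma exists_int_inner_eq_of_mem_corootLattice {α b : V} (hα : α ∈ D.Φ)
    (hb : b ∈ D.corootLattice) : ∃ k : ℤ, ⟪α, b⟫ = k := by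
  induction hb using AddSubgroup.closure_induction with
  | mem x hx =>
    obtain ⟨γ, hγ, rfl⟩ := hx
    obtain ⟨k, hk⟩ := D.crystallographic γ hγ α hα
    exact ⟨k, by rw [real_inner_smul_right, ← hk]; ring⟩
  | zero => exact ⟨0, by simp⟩
  | add x y _ _ hx hy =>
    obtain ⟨k, hk⟩ := hx
    obtain ⟨m, hm⟩ := hy
    exact ⟨k + m, by rw [inner_add_right, hk, hm]; push_cast; ring⟩
  | neg x _ hx =>
    obtain ⟨k, hk⟩ := hx
    exact ⟨-k, by rw [inner_neg_right, hk]; push_cast; ring⟩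

lemma exists_multiset_coroot_sum_eq {b : V} (hb : b ∈ D.corootLattice) :
    ∃ l : Multiset V, (∀ η ∈ l, ∃ γ ∈ D.Φ, η = coroot γ) ∧ l.sum = b := by
  have hneg : -{x : V | ∃ γ ∈ D.Φ, x = coroot γ} ⊆ {x | ∃ γ ∈ D.Φ, x = coroot γ} := by
    rintro x ⟨γ, hγ, hx⟩
    exact ⟨-γ, D.neg_mem γ hγ, by rw [coroot_neg, ← hx, neg_neg]⟩
  have hb' : b ∈ (AddSubgroup.closure {x : V | ∃ γ ∈ D.Φ, x = coroot γ}).toAddSubmonoid := hb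
  rw [AddSubgroup.closure_toAddSubmonoid, Set.union_eq_left.mpr hneg] at hb'
  exact AddSubmonoid.exists_multiset_of_mem_closure hb'

lemma multiset_sum_eq_zero_of_abs_inner_le_one (l : Multiset V)
    (hl : ∀ η ∈ l, ∃ γ ∈ D.Φ, η = coroot γ) (h : ∀ α ∈ D.Φ, |⟪α, l.sum⟫| ≤ 1) :
    l.sum = 0 := by
  by_contra h0
  obtain ⟨η, hηl, hη⟩ := exists_mem_inner_multiset_sum_pos h0
  obtain ⟨γ, hγ, rfl⟩ := hl η hηl
  have hγl : ⟪γ, l.sum⟫ = 1 := by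
    have hpos : 0 < ⟪γ, l.sum⟫ := by
      have hγγ : 0 < ⟪γ, γ⟫ := real_inner_self_pos.mpr (D.ne_zero γ hγ)
      rw [inner_coroot, real_inner_comm, div_pos_iff_of_pos_right hγγ] at hη
      linarith
    have hL : l.sum ∈ D.corootLattice :=
      AddSubgroup.multiset_sum_mem _ _ fun η hη => by
        obtain ⟨γ, hγ, rfl⟩ := hl η hη
        exact AddSubgroup.subset_closure ⟨γ, hγ, rfl⟩
    obtain ⟨k, hk⟩ := D.exists_int_inner_eq_of_mem_corootLattice hγ hL
    have h1 := (abs_le.mp (h γ hγ)).2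
    rw [hk] at hpos h1 ⊢
    have : k = 1 := by
      have : 0 < k := by exact_mod_cast hpos
      have : k ≤ 1 := by exact_mod_cast h1
      omega
    simp [this]
  have herase : (l.erase (coroot γ)).sum = l.sum - ⟪γ, l.sum⟫ • coroot γ := by
    rw [hγl, one_smul, ← Multiset.sum_erase hηl, add_sub_cancel_left]
  have hzero := multiset_sum_eq_zero_of_abs_inner_le_one (l.erase (coroot γ))
    (fun η hη => hl η (Multiset.mem_of_mem_erase hη))
    (fun β hβ => by
      rw [herase, inner_sub_smul_coroot]
      exact h _ (D.reflect_mem γ hγ β hβ))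
  rw [herase, hγl, one_smul, sub_eq_zero] at hzero
  have := inner_coroot_self (D.ne_zero γ hγ)
  rw [← hzero, hγl] at this
  norm_num at this
termination_by Multiset.card l
decreasing_by exact Multiset.card_erase_lt_of_mem hηl

lemma eq_zero_of_mem_corootLattice_of_abs_inner_le_one {a : V} (ha : a ∈ D.corootLattice)
    (h : ∀ α ∈ D.Φ, |⟪α, a⟫| ≤ 1) : a = 0 := by
  obtain ⟨l, hl, rfl⟩ := D.exists_multiset_coroot_sum_eq ha
  exact D.multiset_sum_eq_zero_of_abs_inner_le_one l hl h

lemma exists_int_closure_subset_preimage_Icc {A : Set V} (hA : D.IsAlcove A) {α : V}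
    (hα : α ∈ D.Φ) : ∃ k : ℤ, closure A ⊆ (⟪α, ·⟫) ⁻¹' Set.Icc (k : ℝ) (k + 1) := by
  obtain ⟨x₀, hx₀, rfl⟩ := hA
  have hf : Continuous (⟪α, ·⟫ : V → ℝ) := continuous_const.inner continuous_id
  have hC : IsPreconnected (connectedComponentIn D.stiefelDiagramᶜ x₀) :=
    isPreconnected_connectedComponentIn
  have hImage := hC.image _ hf.continuousOn
  have havoid : ∀ k : ℤ, (k : ℝ) ∉ (⟪α, ·⟫) '' connectedComponentIn D.stiefelDiagramᶜ x₀ := by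
    rintro k ⟨z, hz, hzk⟩
    exact connectedComponentIn_subset _ _ hz (Set.mem_biUnion hα (Set.mem_iUnion.mpr ⟨k, hzk⟩))
  have hx₀' := Set.mem_image_of_mem (⟪α, ·⟫)
    (mem_connectedComponentIn (show x₀ ∈ D.stiefelDiagramᶜ from hx₀))
  refine ⟨⌊⟪α, x₀⟫⌋, closure_minimal (fun y hy => ⟨?_, ?_⟩) (isClosed_Icc.preimage hf)⟩
  · by_contra! hlt
    exact havoid _ (hImage.Icc_subset (Set.mem_image_of_mem _ hy) hx₀' ⟨hlt.le, Int.floor_le _⟩)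
  · by_contra! hlt
    refine havoid (⌊⟪α, x₀⟫⌋ + 1)
      (hImage.Icc_subset hx₀' (Set.mem_image_of_mem _ hy) ⟨?_, ?_⟩) <;> push_cast
    exacts [(Int.lt_floor_add_one _).le, hlt.le]

lemma abs_inner_le_one_of_mem_alcoveStar {x α : V} (hx : x ∈ D.alcoveStar) (hα : α ∈ D.Φ) :
    |⟪α, x⟫| ≤ 1 := by
  obtain ⟨A, hA, h0, hxA⟩ := hx
  obtain ⟨k, hk⟩ := D.exists_int_closure_subset_preimage_Icc hA hα
  have h0k := hk h0
  have hxk := hk hxA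
  simp only [Set.mem_preimage, inner_zero_right, Set.mem_Icc] at h0k hxk
  rw [abs_le]
  constructor <;> linarith

lemma eq_of_mem_interior_alcoveStar_of_sub_mem {x y : V} (hx : x ∈ interior D.alcoveStar)
    (hy : y ∈ D.alcoveStar) (hxy : y - x ∈ D.corootLattice) : y = x := by
  refine sub_eq_zero.mp (D.eq_zero_of_mem_corootLattice_of_abs_inner_le_one hxy fun α hα => ?_)
  obtain ⟨k, hk⟩ := D.exists_int_inner_eq_of_mem_corootLattice hα hxy
  have hx' := abs_lt.mp <| abs_inner_lt_of_mem_interior (D.ne_zero α hα)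
    (fun z hz => D.abs_inner_le_one_of_mem_alcoveStar hz hα) hx
  have hy' := abs_le.mp (D.abs_inner_le_one_of_mem_alcoveStar hy hα)
  rw [inner_sub_right] at hk
  have hlt : k < 2 := by exact_mod_cast (show (k : ℝ) < 2 by linarith)
  have hgt : -2 < k := by exact_mod_cast (show (-2 : ℝ) < k by linarith)
  rw [inner_sub_right, hk, abs_le]
  exact ⟨by exact_mod_cast (show -1 ≤ k by omega), by exact_mod_cast (show k ≤ 1 by omega)⟩

lemma subset_alcoveStar_of_isFaceOfStar {σ : Set V} (hσ : D.IsFaceOfStar σ) :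
    σ ⊆ D.alcoveStar := by
  obtain ⟨-, A, hA, h0, s, -, rfl⟩ := hσ
  exact fun x hx => ⟨A, hA, h0, hx.1⟩

end RootSystemData

end

/-- Let `G` be a compact simply-connected simple Lie group, `𝒫` the
union of the closures of the Weyl alcoves around the origin, and `L` the coroot lattice.
If `σ` is a face of `𝒫` such that `σ + a` is also a face of `𝒫` for some nonzero
`a ∈ L`, then both `σ` and `σ + a` are faces of the boundary of `𝒫`. -/
theorem face_translate_subset_frontier (n : ℕ) (D : RootSystemData n)
    (σ : Set (EuclideanSpace ℝ (Fin n))) (a : EuclideanSpace ℝ (Fin n))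
    (ha : a ∈ D.corootLattice) (ha0 : a ≠ 0)
    (hσ : D.IsFaceOfStar σ) (hσa : D.IsFaceOfStar ((a + ·) '' σ)) :
    σ ⊆ frontier D.alcoveStar ∧ (a + ·) '' σ ⊆ frontier D.alcoveStar := by
  have hσ𝒫 := D.subset_alcoveStar_of_isFaceOfStar hσ
  have hσa𝒫 := D.subset_alcoveStar_of_isFaceOfStar hσa
  constructor
  · intro x hx
    refine ⟨subset_closure (hσ𝒫 hx), fun hint => ha0 ?_⟩
    have := D.eq_of_mem_interior_alcoveStar_of_sub_mem hint (hσa𝒫 ⟨x, hx, rfl⟩)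
      (by rwa [add_sub_cancel_right])
    exact add_eq_right.mp this
  · rintro _ ⟨x, hx, rfl⟩
    refine ⟨subset_closure (hσa𝒫 ⟨x, hx, rfl⟩), fun hint => ha0 ?_⟩
    have := D.eq_of_mem_interior_alcoveStar_of_sub_mem hint (hσ𝒫 hx)
      (by rwa [sub_add_cancel_right, neg_mem_iff])
    exact right_eq_add.mp this
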